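/- arXiv:1607.04460 — 6 statements merged into one kernel-verified Lean document; each statement's English description precedes it below -/
import Mathlib

section
/- Let newp2 : ℤ⁶ → Prop be the least relation satisfying: (R1) for all x1 y1 z1 x2 y2 z2, if z1 ≤ 9 and newp2(x1, y1, z1+1, x2, y2, z2) then newp2(x1, y1, z1, x2, y2, z2); (R2) for all x1 y1 z1, if z1 ≥ 10 then newp2(x1, y1, z1, x1, y1, z1). Let newp4' : ℤ × ℤ → Prop be the least relation satisfying: (R1') for all z1 z2, if z1 ≤ 9 and newp4'(z1+1, z2) then newp4'(z1, z2); (R2') for all z1, if z1 ≥ 10 then newp4'(z1, z1). Then for all integers x1, y1, z1, x2, z2: (∃ y2, newp2(x1, y1, z1, x2, y2, z2)) holds if and only if x2 = x1 and newp4'(z1, z2) holds. -/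
/-- `Newp2` is the least relation closed under the clauses of program P1. -/
inductive Newp2 : ℤ → ℤ → ℤ → ℤ → ℤ → ℤ → Prop
  | step (x1 y1 z1 x2 y2 z2 : ℤ) : z1 ≤ 9 → Newp2 x1 y1 (z1 + 1) x2 y2 z2 →
      Newp2 x1 y1 z1 x2 y2 z2
  | base (x1 y1 z1 : ℤ) : z1 ≥ 10 → Newp2 x1 y1 z1 x1 y1 z1

/-- `Newp4'` is the least relation closed under the clauses of program P3. -/
inductive Newp4' : ℤ → ℤ → Prop
  | step (z1 z2 : ℤ) : z1 ≤ 9 → Newp4' (z1 + 1) z2 → Newp4' z1 z2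
  | base (z1 : ℤ) : z1 ≥ 10 → Newp4' z1 z1

theorem exists_newp2_iff_newp4' :
    ∀ x1 y1 z1 x2 z2 : ℤ,
      (∃ y2 : ℤ, Newp2 x1 y1 z1 x2 y2 z2) ↔ x2 = x1 ∧ Newp4' z1 z2 := by
  intro x1 y1 z1 x2 z2
  constructor
  · rintro ⟨y2, h⟩
    induction h with
    | step _ _ _ _ h1 _ ih =>
        exact ⟨ih.1, Newp4'.step _ _ h1 ih.2⟩
    | base _ h1 => exact ⟨rfl, Newp4'.base _ h1⟩
  · rintro ⟨rfl, h⟩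
    refine ⟨y1, ?_⟩
    induction h with
    | step a b h1 h2 ih => exact Newp2.step _ _ _ _ _ _ h1 ih
    | base a h1 => exact Newp2.base _ _ _ h1
end

section
/- Let newp2 : ℤ⁶ → Prop be the least relation satisfying: (R1) for all x1 y1 z1 x2 y2 z2, if z1 ≤ 9 and newp2(x1, y1, z1+1, x2, y2, z2) then newp2(x1, y1, z1, x2, y2, z2); (R2) for all x1 y1 z1, if z1 ≥ 10 then newp2(x1, y1, z1, x1, y1, z1). Define newp1(x1, y1, x2, z2) to hold iff there exists an integer y2 with newp2(x1, y1, x1+1, x2, y2, z2). Then for all integers x1, y1, x2, z2, newp1(x1, y1, x2, z2) holds if and only if x2 = x1 and z2 = max (x1 + 1) 10. -/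
/-- `Newp1` of program P1 (clause 2, projecting away the non-linking variable Y2). -/
def Newp1 (x1 y1 x2 z2 : ℤ) : Prop :=
  ∃ y2 : ℤ, Newp2 x1 y1 (x1 + 1) x2 y2 z2

lemma newp2_char (x1 y1 z1 x2 y2 z2 : ℤ) (h : Newp2 x1 y1 z1 x2 y2 z2) :
    x2 = x1 ∧ y2 = y1 ∧ z2 = max z1 10 := by
  induction h with
  | step c d e f h1 h2 ih =>
      obtain ⟨hx, hy, hz⟩ := ih
      exact ⟨hx, hy, by omega⟩
  | base c h1 =>
      exact ⟨rfl, rfl, by omega⟩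

lemma newp2_build (x1 y1 z1 : ℤ) : Newp2 x1 y1 z1 x1 y1 (max z1 10) := by
  by_cases h : z1 ≥ 10
  · have : max z1 10 = z1 := by omega
    rw [this]; exact Newp2.base _ _ _ h
  · push_neg at h
    have key : ∀ n : ℕ, ∀ z : ℤ, 10 - z ≤ n → Newp2 x1 y1 z x1 y1 (max z 10) := by
      intro n
      induction n with
      | zero =>
        intro z hz
        have : max z 10 = z := by omega
        rw [this]; exact Newp2.base _ _ _ (by omega)
      | succ k ih =>
        intro z hz
        by_cases hz10 : z ≥ 10
        · have : max z 10 = z := by omega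
          rw [this]; exact Newp2.base _ _ _ hz10
        · have h1 : Newp2 x1 y1 (z+1) x1 y1 (max (z+1) 10) := ih (z+1) (by omega)
          have : max (z+1) 10 = max z 10 := by omega
          rw [this] at h1
          exact Newp2.step _ _ _ _ _ _ (by omega) h1
    exact key (10 - z1).toNat z1 (by omega)

theorem newp1_iff :
    ∀ x1 y1 x2 z2 : ℤ, Newp1 x1 y1 x2 z2 ↔ x2 = x1 ∧ z2 = max (x1 + 1) 10 := by
  intro x1 y1 x2 z2
  constructor
  · rintro ⟨y2, h⟩
    obtain ⟨hx, _, hz⟩ := newp2_char _ _ _ _ _ _ h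
    exact ⟨hx, hz⟩
  · rintro ⟨rfl, rfl⟩
    exact ⟨y1, newp2_build x2 y1 (x2 + 1)⟩
end

section
/- Let newp2 : ℤ⁶ → Prop be the least relation satisfying: (R1) for all x1 y1 z1 x2 y2 z2, if z1 ≤ 9 and newp2(x1, y1, z1+1, x2, y2, z2) then newp2(x1, y1, z1, x2, y2, z2); (R2) for all x1 y1 z1, if z1 ≥ 10 then newp2(x1, y1, z1, x1, y1, z1). Define newp1(x1, y1, x2, z2) to hold iff there exists an integer y2 with newp2(x1, y1, x1+1, x2, y2, z2). Then the second argument of newp1 is redundant: for all integers x1, y1, y1', x2, z2, newp1(x1, y1, x2, z2) holds if and only if newp1(x1, y1', x2, z2) holds. -/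
lemma newp2_char_fwd {x1 y1 z1 x2 y2 z2 : ℤ} (h : Newp2 x1 y1 z1 x2 y2 z2) :
    x2 = x1 ∧ y2 = y1 ∧ z2 = max z1 10 := by
  induction h with
  | step _ _ _ _ hz _ ih => exact ⟨ih.1, ih.2.1, by omega⟩
  | base _ _ => exact ⟨rfl, rfl, by omega⟩

lemma newp2_char_bwd (x1 y1 : ℤ) : ∀ n : ℕ, ∀ z1 z2 : ℤ, z2 = max z1 10 →
    (10 - z1).toNat = n → Newp2 x1 y1 z1 x1 y1 z2 := by
  intro n
  induction n with
  | zero =>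
    intro z1 z2 hmax hn
    have h10 : z1 ≥ 10 := by omega
    have : z2 = z1 := by omega
    subst this
    exact Newp2.base _ _ _ h10
  | succ k ih =>
    intro z1 z2 hmax hn
    have h9 : z1 ≤ 9 := by omega
    exact Newp2.step _ _ _ _ _ _ h9 (ih (z1 + 1) z2 (by omega) (by omega))

theorem newp1_second_arg_redundant :
    ∀ x1 y1 y1' x2 z2 : ℤ, Newp1 x1 y1 x2 z2 ↔ Newp1 x1 y1' x2 z2 := by
  have key : ∀ a b c d : ℤ, Newp1 a b c d ↔ (c = a ∧ d = max (a + 1) 10) := by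
    intro a b c d
    constructor
    · rintro ⟨y2, h⟩
      obtain ⟨h1, _, h3⟩ := newp2_char_fwd h
      exact ⟨h1, h3⟩
    · rintro ⟨rfl, hd⟩
      exact ⟨b, newp2_char_bwd c b _ _ _ hd rfl⟩
  intro x1 y1 y1' x2 z2
  rw [key, key]
end

section
/- Let newp2 : ℤ⁶ → Prop be the least relation satisfying: (R1) for all x1 y1 z1 x2 y2 z2, if z1 ≤ 9 and newp2(x1, y1, z1+1, x2, y2, z2) then newp2(x1, y1, z1, x2, y2, z2); (R2) for all x1 y1 z1, if z1 ≥ 10 then newp2(x1, y1, z1, x1, y1, z1). Define newp1(x1, y1, x2, z2) ↔ ∃ y2, newp2(x1, y1, x1+1, x2, y2, z2), and define unsafe_P1 ↔ ∃ x1 y1 x2 y2, x1 ≥ 0 ∧ y2 ≤ 0 ∧ newp1(x1, y1, x2, y2). Let newp4 : ℤ × ℤ × ℤ → Prop be the least relation satisfying: (R1') for all x1 z1 z2, if z1 ≤ 9 and newp4(x1, z1+1, z2) then newp4(x1, z1, z2); (R2') for all x1 z1, if z1 ≥ 10 then newp4(x1, z1, z1). Define newp3(x1, z2) ↔ newp4(x1,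 x1+1, z2), and define unsafe_P2 ↔ ∃ x1 y2, x1 ≥ 0 ∧ y2 ≤ 0 ∧ newp3(x1, y2). Then unsafe_P1 holds if and only if unsafe_P2 holds. -/
/-- `unsafe` in the least model of program P1. -/
def UnsafeP1 : Prop :=
  ∃ x1 y1 x2 y2 : ℤ, x1 ≥ 0 ∧ y2 ≤ 0 ∧ Newp1 x1 y1 x2 y2

/-- `Newp4` is the least relation closed under the clauses of program P2. -/
inductive Newp4 : ℤ → ℤ → ℤ → Prop
  | step (x1 z1 z2 : ℤ) : z1 ≤ 9 → Newp4 x1 (z1 + 1) z2 → Newp4 x1 z1 z2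
  | base (x1 z1 : ℤ) : z1 ≥ 10 → Newp4 x1 z1 z1

/-- `Newp3` of program P2. -/
def Newp3 (x1 z2 : ℤ) : Prop := Newp4 x1 (x1 + 1) z2

/-- `unsafe` in the least model of program P2. -/
def UnsafeP2 : Prop :=
  ∃ x1 y2 : ℤ, x1 ≥ 0 ∧ y2 ≤ 0 ∧ Newp3 x1 y2

lemma newp2_to_newp4 {x1 y1 z1 x2 y2 z2 : ℤ} (h : Newp2 x1 y1 z1 x2 y2 z2) :
    Newp4 x1 z1 z2 := by
  induction h with
  | step => exact Newp4.step _ _ _ (by assumption) (by assumption)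
  | base => exact Newp4.base _ _ (by assumption)

lemma newp4_to_newp2 (y1 : ℤ) {x1 z1 z2 : ℤ} (h : Newp4 x1 z1 z2) :
    Newp2 x1 y1 z1 x1 y1 z2 := by
  induction h with
  | step => exact Newp2.step _ _ _ _ _ _ (by assumption) (by assumption)
  | base => exact Newp2.base _ _ _ (by assumption)

theorem unsafeP1_iff_unsafeP2 : UnsafeP1 ↔ UnsafeP2 := by
  constructor
  · rintro ⟨x1, y1, x2, y2, hx, hy, z2, h⟩
    exact ⟨x1, y2, hx, hy, newp2_to_newp4 h⟩
  · rintro ⟨x1, y2, hx, hy, h⟩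
    exact ⟨x1, 0, x1, y2, hx, hy, 0, newp4_to_newp2 0 h⟩
end

section
/- Let newp4 : ℤ × ℤ × ℤ → Prop be the least relation satisfying: (R1) for all x1 z1 z2, if z1 ≤ 9 and newp4(x1, z1+1, z2) then newp4(x1, z1, z2); (R2) for all x1 z1, if z1 ≥ 10 then newp4(x1, z1, z1). Define newp3(x1, z2) ↔ newp4(x1, x1+1, z2), and define unsafe_P2 ↔ ∃ x1 y2, x1 ≥ 0 ∧ y2 ≤ 0 ∧ newp3(x1, y2). Let newp4' : ℤ × ℤ → Prop be the least relation satisfying: (R1') for all z1 z2, if z1 ≤ 9 and newp4'(z1+1, z2) then newp4'(z1, z2); (R2') for all z1, if z1 ≥ 10 then newp4'(z1, z1). Define newp3'(x1, z2) ↔ newp4'(x1+1, z2), and define unsafe_P3 ↔ ∃ x1 y2, x1 ≥ 0 ∧ y2 ≤ 0 ∧ newp3'(x1, y2). Then unsafe_P2 holds if and only if unsafe_P3 holds. -/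
/-- `Newp3'` of program P3. -/
def Newp3' (x1 z2 : ℤ) : Prop := Newp4' (x1 + 1) z2

/-- `unsafe` in the least model of program P3. -/
def UnsafeP3 : Prop :=
  ∃ x1 y2 : ℤ, x1 ≥ 0 ∧ y2 ≤ 0 ∧ Newp3' x1 y2

lemma newp4_iff (x1 z1 z2 : ℤ) : Newp4 x1 z1 z2 ↔ Newp4' z1 z2 := by
  constructor
  · intro h
    induction h with
    | step _ _ h _ ih => exact Newp4'.step _ _ h ih
    | base _ h => exact Newp4'.base _ h
  · intro h
    induction h with
    | step _ _ h _ ih => exact Newp4.step _ _ _ h ih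
    | base _ h => exact Newp4.base _ _ h

theorem unsafeP2_iff_unsafeP3 : UnsafeP2 ↔ UnsafeP3 := by
  unfold UnsafeP2 UnsafeP3 Newp3 Newp3'
  simp only [newp4_iff]
end

section
/- Let newp2 : ℤ⁶ → Prop be the least relation satisfying: (R1) for all x1 y1 z1 x2 y2 z2, if z1 ≤ 9 and newp2(x1, y1, z1+1, x2, y2, z2) then newp2(x1, y1, z1, x2, y2, z2); (R2) for all x1 y1 z1, if z1 ≥ 10 then newp2(x1, y1, z1, x1, y1, z1). Define newp1(x1, y1, x2, z2) ↔ ∃ y2, newp2(x1, y1, x1+1, x2, y2, z2), and define unsafe_P1 ↔ ∃ x1 y1 x2 y2, x1 ≥ 0 ∧ y2 ≤ 0 ∧ newp1(x1, y1, x2, y2). Let newp4' : ℤ × ℤ → Prop be the least relation satisfying: (R1') for all z1 z2, if z1 ≤ 9 and newp4'(z1+1, z2) then newp4'(z1, z2); (R2') for all z1, if z1 ≥ 10 then newp4'(z1, z1). Define newp3'(x1, z2) ↔ newp4'(x1+1, z2), and define unsafe_P3 ↔ ∃ x1 y2, x1 ≥ 0 ∧ y2 ≤ 0 ∧ newp3'(x1,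 y2). Then unsafe_P1 holds if and only if unsafe_P3 holds. -/
lemma forward {x1 y1 z1 x2 y2 z2 : ℤ} (h : Newp2 x1 y1 z1 x2 y2 z2) :
    Newp4' z1 z2 := by
  induction h with
  | step => exact Newp4'.step _ _ ‹_› ‹_›
  | base => exact Newp4'.base _ ‹_›

lemma backward {z1 z2 : ℤ} (h : Newp4' z1 z2) (a b : ℤ) :
    Newp2 a b z1 a b z2 := by
  induction h with
  | step => exact Newp2.step _ _ _ _ _ _ ‹_› ‹_›
  | base => exact Newp2.base _ _ _ ‹_›

theorem unsafeP1_iff_unsafeP3 : UnsafeP1 ↔ UnsafeP3 := by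
  constructor
  · rintro ⟨x1, y1, x2, y2, hx, hy, w, h⟩
    exact ⟨x1, y2, hx, hy, forward h⟩
  · rintro ⟨x1, y2, hx, hy, h⟩
    exact ⟨x1, 0, x1, y2, hx, hy, 0, backward h x1 0⟩
end
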